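/- arXiv:1206.2672 — 4 statements merged into one kernel-verified Lean document; each statement's English description precedes it below -/
import Mathlib

section
/- Let X be a metric space, K_A > 0, and let σ, τ : [0,c) → X be continuous curves such that for every s ∈ [0,c): lim_{h→0⁺} d(σ(s+h), Φ^{t+s}_h(σ(s)))/h = 0 and lim_{h→0⁺} d(τ(s+h), Φ^{t+s}_h(τ(s)))/h = 0, where Φ satisfies d(Φ^u_h(x), Φ^u_h(y)) ≤ d(x,y)(1+hK_A) for all relevant x, y, u, h. Then d(σ(s), τ(s)) ≤ e^{K_A s}·d(σ(0), τ(0)) for all s ∈ [0,c). -/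
/-! By the triangle inequality and Condition A,
`d(σ(s+h), τ(s+h)) ≤ (1 + h K_A) d(σ(s), τ(s)) + o(h)` as `h → 0⁺`, because each curve is
tangent to the arc field. So the upper right Dini derivative of `s ↦ d(σ(s), τ(s))` is at most
`K_A d(σ(s), τ(s))`, and Gronwall's inequality for Dini derivatives gives the exponential bound. -/

open Filter Set Topology Real

theorem le_exp_mul_of_eventually_slope_lt {f : ℝ → ℝ} {K a b : ℝ}
    (hf : ContinuousOn f (Icc a b))
    (hslope : ∀ x ∈ Ico a b, ∀ r, K * f x < r → ∀ᶠ h in 𝓝[>] 0, (f (x + h) - f x) / h < r) :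
    ∀ x ∈ Icc a b, f x ≤ exp (K * (x - a)) * f a := by
  intro x hx
  have hgronwall := le_gronwallBound_of_liminf_deriv_right_le (f' := fun y => K * f y) (ε := 0)
    hf ?_ le_rfl (fun _ _ => (add_zero _).ge) x hx
  · rwa [gronwallBound_ε0, mul_comm] at hgronwall
  · intro y hy r hr
    rw [← add_zero y, ← map_add_left_nhdsGT, frequently_map]
    refine ((hslope y hy r hr).mono fun h hh => ?_).frequently
    simpa [div_eq_inv_mul] using hh

theorem eventually_slope_dist_lt {X : Type*} [PseudoMetricSpace X]
    {σ τ : ℝ → X} {Φ : X → ℝ → X} {K s r : ℝ}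
    (hA : ∀ x y h, 0 ≤ h → dist (Φ x h) (Φ y h) ≤ dist x y * (1 + h * K))
    (hσ : Tendsto (fun h => dist (σ (s + h)) (Φ (σ s) h) / h) (𝓝[>] 0) (𝓝 0))
    (hτ : Tendsto (fun h => dist (τ (s + h)) (Φ (τ s) h) / h) (𝓝[>] 0) (𝓝 0))
    (hr : K * dist (σ s) (τ s) < r) :
    ∀ᶠ h in 𝓝[>] 0, (dist (σ (s + h)) (τ (s + h)) - dist (σ s) (τ s)) / h < r := by
  set d := dist (σ s) (τ s)
  set e₁ := fun h => dist (σ (s + h)) (Φ (σ s) h)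
  set e₂ := fun h => dist (τ (s + h)) (Φ (τ s) h)
  have hbound : ∀ h > 0,
      (dist (σ (s + h)) (τ (s + h)) - d) / h ≤ K * d + (e₁ h / h + e₂ h / h) := by
    intro h hh
    have hstep : dist (σ (s + h)) (τ (s + h)) ≤ e₁ h + d * (1 + h * K) + e₂ h :=
      calc dist (σ (s + h)) (τ (s + h))
          ≤ e₁ h + dist (Φ (σ s) h) (Φ (τ s) h) + dist (Φ (τ s) h) (τ (s + h)) :=
            dist_triangle4 _ _ _ _
        _ ≤ e₁ h + d * (1 + h * K) + e₂ h := by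
            rw [dist_comm (Φ (τ s) h)]
            gcongr
            exact hA _ _ _ hh.le
    rw [div_le_iff₀ hh, add_mul, add_mul, div_mul_cancel₀ _ hh.ne', div_mul_cancel₀ _ hh.ne']
    linarith
  have hlim : Tendsto (fun h => K * d + (e₁ h / h + e₂ h / h)) (𝓝[>] 0) (𝓝 (K * d + (0 + 0))) :=
    tendsto_const_nhds.add (hσ.add hτ)
  filter_upwards [self_mem_nhdsWithin, hlim.eventually_lt_const (by simpa using hr)]
    with h hh hlt
  exact (hbound h hh).trans_lt hlt

theorem continuous_dependence_general {X : Type*} [MetricSpace X]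
    (Φ : ℝ → X → ℝ → X) (K_A t c : ℝ)
    (σ τ : ℝ → X)
    (hσcont : ContinuousOn σ (Set.Ico 0 c))
    (hτcont : ContinuousOn τ (Set.Ico 0 c))
    (hA : ∀ (u : ℝ) (x y : X) (h : ℝ), 0 ≤ h →
      dist (Φ u x h) (Φ u y h) ≤ dist x y * (1 + h * K_A))
    (hσ : ∀ s ∈ Set.Ico (0 : ℝ) c,
      Filter.Tendsto (fun h => dist (σ (s + h)) (Φ (t + s) (σ s) h) / h)
        (nhdsWithin 0 (Set.Ioi 0)) (nhds 0))
    (hτ : ∀ s ∈ Set.Ico (0 : ℝ) c,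
      Filter.Tendsto (fun h => dist (τ (s + h)) (Φ (t + s) (τ s) h) / h)
        (nhdsWithin 0 (Set.Ioi 0)) (nhds 0)) :
    ∀ s ∈ Set.Ico (0 : ℝ) c,
      dist (σ s) (τ s) ≤ Real.exp (K_A * s) * dist (σ 0) (τ 0) := by
  rintro s ⟨hs0, hsc⟩
  have hsub : Icc 0 s ⊆ Ico 0 c := fun u hu => ⟨hu.1, hu.2.trans_lt hsc⟩
  have hsub' : Ico 0 s ⊆ Ico 0 c := Ico_subset_Ico_right hsc.le
  have hcont : ContinuousOn (fun u => dist (σ u) (τ u)) (Icc 0 s) :=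
    fun u hu => ((hσcont.mono hsub) u hu).dist ((hτcont.mono hsub) u hu)
  simpa using le_exp_mul_of_eventually_slope_lt hcont
    (fun u hu _ hr => eventually_slope_dist_lt (hA (t + u)) (hσ u (hsub' hu)) (hτ u (hsub' hu)) hr)
    s ⟨hs0, le_rfl⟩

/-- Continuous dependence on the initial point: two solution curves of an arc field
satisfying Condition A separate at most at exponential rate `e^{K_A s}`. -/
theorem continuous_dependence {X : Type*} [MetricSpace X]
    (Φ : ℝ → X → ℝ → X) (K_A t c : ℝ) (hKA : 0 < K_A) (hc : 0 < c)
    (σ τ : ℝ → X)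
    (hσcont : ContinuousOn σ (Set.Ico 0 c))
    (hτcont : ContinuousOn τ (Set.Ico 0 c))
    (hA : ∀ (u : ℝ) (x y : X) (h : ℝ), 0 ≤ h →
      dist (Φ u x h) (Φ u y h) ≤ dist x y * (1 + h * K_A))
    (hσ : ∀ s ∈ Set.Ico (0 : ℝ) c,
      Filter.Tendsto (fun h => dist (σ (s + h)) (Φ (t + s) (σ s) h) / h)
        (nhdsWithin 0 (Set.Ioi 0)) (nhds 0))
    (hτ : ∀ s ∈ Set.Ico (0 : ℝ) c,
      Filter.Tendsto (fun h => dist (τ (s + h)) (Φ (t + s) (τ s) h) / h)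
        (nhdsWithin 0 (Set.Ioi 0)) (nhds 0)) :
    ∀ s ∈ Set.Ico (0 : ℝ) c,
      dist (σ s) (τ s) ≤ Real.exp (K_A * s) * dist (σ 0) (τ 0) :=
  continuous_dependence_general Φ K_A t c σ τ hσcont hτcont hA hσ hτ
end

section
/- Let X be a metric space with arc fields Φ, Ψ satisfying: Condition A for Ψ with constant K_A; Condition D' with constants K_D, C_d, α: d(Φ^{s+h}_h(Ψ^s_h(x)), Ψ^{s+h}_h(Φ^s_h(y))) ≤ d(x,y)(1+hK_D) + C_d·h^{1+α}; and the consistency estimate d(Φ^s_{2h}(b), Φ^{s+h}_h(Φ^s_h(b))) ≤ h·g̃(h,h) and similarly for Ψ. Then for all admissible b₁, b₂, s, h: d(Ψ^{s+3h}_h ∘ Φ^{s+2h}_h ∘ Ψ^{s+h}_h ∘ Φ^s_h(b₁), Ψ^{s+2h}_{2h} ∘ Φ^s_{2h}(b₂)) ≤ d(b₁,b₂)(1+hK)³ + C(h), where K = max{K_A, K_D} and C(h) = C_d·h^{1+α}(1+hK) + h·g̃(h,h)·(1+(1+hK)²). -/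
/-- One-step estimate for the sum of two arc fields (Lemma 3.4): the alternating
composition of four steps of size `h` versus the splitting step of size `2h`. -/
theorem sum_one_step_estimate {X : Type*} [MetricSpace X]
    (Φ Ψ : ℝ → X → ℝ → X) (K_A K_D C_d α : ℝ) (gtil : ℝ → ℝ → ℝ)
    (hKA : 0 ≤ K_A) (hKD : 0 ≤ K_D) (hCd : 0 < C_d) (hα : 0 < α ∧ α < 1)
    (hAΦ : ∀ (s : ℝ) (x y : X) (h : ℝ), 0 ≤ h →
      dist (Φ s x h) (Φ s y h) ≤ dist x y * (1 + h * K_A))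
    (hAΨ : ∀ (s : ℝ) (x y : X) (h : ℝ), 0 ≤ h →
      dist (Ψ s x h) (Ψ s y h) ≤ dist x y * (1 + h * K_A))
    (hD' : ∀ (s : ℝ) (x y : X) (h : ℝ), 0 ≤ h →
      dist (Φ (s + h) (Ψ s x h) h) (Ψ (s + h) (Φ s y h) h) ≤
        dist x y * (1 + h * K_D) + C_d * h ^ (1 + α))
    (hgΦ : ∀ (s : ℝ) (b : X) (h : ℝ), 0 ≤ h →
      dist (Φ s b (2 * h)) (Φ (s + h) (Φ s b h) h) ≤ h * gtil h h)
    (hgΨ : ∀ (s : ℝ) (b : X) (h : ℝ), 0 ≤ h →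
      dist (Ψ s b (2 * h)) (Ψ (s + h) (Ψ s b h) h) ≤ h * gtil h h) :
    ∀ (b₁ b₂ : X) (s h : ℝ), 0 ≤ h →
      dist (Ψ (s + 3 * h) (Φ (s + 2 * h) (Ψ (s + h) (Φ s b₁ h) h) h) h)
           (Ψ (s + 2 * h) (Φ s b₂ (2 * h)) (2 * h)) ≤
        dist b₁ b₂ * (1 + h * max K_A K_D) ^ 3 +
          (C_d * h ^ (1 + α) * (1 + h * max K_A K_D) +
            h * gtil h h * (1 + (1 + h * max K_A K_D) ^ 2)) := by
  intro b₁ b₂ s h hh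
  set K := max K_A K_D with hKdef
  have hK0 : 0 ≤ K := le_trans hKA (le_max_left _ _)
  have hA0 : (0:ℝ) ≤ 1 + h * K_A := by positivity
  have hM0 : (0:ℝ) ≤ 1 + h * K := by positivity
  have hAM : 1 + h * K_A ≤ 1 + h * K := by
    have : K_A ≤ K := le_max_left _ _
    nlinarith
  have hDM : 1 + h * K_D ≤ 1 + h * K := by
    have : K_D ≤ K := le_max_right _ _
    nlinarith
  have hD0 : (0:ℝ) ≤ 1 + h * K_D := by positivity
  -- points
  set P1 := Ψ (s + 3 * h) (Φ (s + 2 * h) (Ψ (s + h) (Φ s b₁ h) h) h) h with hP1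
  set P2 := Ψ (s + 3 * h) (Ψ (s + 2 * h) (Φ (s + h) (Φ s b₂ h) h) h) h with hP2
  set P3 := Ψ (s + 3 * h) (Ψ (s + 2 * h) (Φ s b₂ (2 * h)) h) h with hP3
  set P4 := Ψ (s + 2 * h) (Φ s b₂ (2 * h)) (2 * h) with hP4
  have hg0 : 0 ≤ h * gtil h h := le_trans dist_nonneg (hgΦ s b₂ h hh)
  have hCt0 : (0:ℝ) ≤ C_d * h ^ (1 + α) := by positivity
  -- bound d(P1,P2)
  have hstep : dist (Φ s b₁ h) (Φ s b₂ h) ≤ dist b₁ b₂ * (1 + h * K_A) :=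
    hAΦ s b₁ b₂ h hh
  have hDcore := hD' (s + h) (Φ s b₁ h) (Φ s b₂ h) h hh
  have e1 : s + h + h = s + 2 * h := by ring
  rw [e1] at hDcore
  have h12 : dist P1 P2 ≤
      (dist (Φ s b₁ h) (Φ s b₂ h) * (1 + h * K_D) + C_d * h ^ (1 + α)) *
        (1 + h * K_A) := by
    calc dist P1 P2 ≤
        dist (Φ (s + 2 * h) (Ψ (s + h) (Φ s b₁ h) h) h)
          (Ψ (s + 2 * h) (Φ (s + h) (Φ s b₂ h) h) h) * (1 + h * K_A) :=
          hAΨ _ _ _ h hh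
      _ ≤ _ := by
          apply mul_le_mul_of_nonneg_right hDcore hA0
  -- bound d(P2,P3)
  have h23 : dist P2 P3 ≤ h * gtil h h * (1 + h * K_A) ^ 2 := by
    have hin : dist (Ψ (s + 2 * h) (Φ (s + h) (Φ s b₂ h) h) h)
        (Ψ (s + 2 * h) (Φ s b₂ (2 * h)) h) ≤
        dist (Φ (s + h) (Φ s b₂ h) h) (Φ s b₂ (2 * h)) * (1 + h * K_A) :=
      hAΨ _ _ _ h hh
    have hg : dist (Φ (s + h) (Φ s b₂ h) h) (Φ s b₂ (2 * h)) ≤ h * gtil h h := by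
      rw [dist_comm]; exact hgΦ s b₂ h hh
    calc dist P2 P3 ≤
        dist (Ψ (s + 2 * h) (Φ (s + h) (Φ s b₂ h) h) h)
          (Ψ (s + 2 * h) (Φ s b₂ (2 * h)) h) * (1 + h * K_A) := hAΨ _ _ _ h hh
      _ ≤ (h * gtil h h * (1 + h * K_A)) * (1 + h * K_A) := by
          apply mul_le_mul_of_nonneg_right _ hA0
          exact le_trans hin (mul_le_mul_of_nonneg_right hg hA0)
      _ = h * gtil h h * (1 + h * K_A) ^ 2 := by ring
  -- bound d(P3,P4)
  have h34 : dist P3 P4 ≤ h * gtil h h := by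
    have := hgΨ (s + 2 * h) (Φ s b₂ (2 * h)) h hh
    have e2 : s + 2 * h + h = s + 3 * h := by ring
    rw [e2] at this
    rw [hP3, hP4, dist_comm]
    exact this
  have htri : dist P1 P4 ≤ dist P1 P2 + dist P2 P3 + dist P3 P4 :=
    dist_triangle4 P1 P2 P3 P4
  have hd0 : (0:ℝ) ≤ dist b₁ b₂ := dist_nonneg
  have hA2 : (1 + h * K_A) ^ 2 ≤ (1 + h * K) ^ 2 := by nlinarith
  have hprod : (1 + h * K_A) * (1 + h * K_D) * (1 + h * K_A) ≤ (1 + h * K) ^ 3 := by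
    have h1 : (1 + h * K_A) * (1 + h * K_D) ≤ (1 + h * K) * (1 + h * K) :=
      mul_le_mul hAM hDM hD0 hM0
    have h2 : (1 + h * K_A) * (1 + h * K_D) * (1 + h * K_A) ≤
        (1 + h * K) * (1 + h * K) * (1 + h * K) :=
      mul_le_mul h1 hAM hA0 (by positivity)
    calc (1 + h * K_A) * (1 + h * K_D) * (1 + h * K_A) ≤
        (1 + h * K) * (1 + h * K) * (1 + h * K) := h2
      _ = (1 + h * K) ^ 3 := by ring
  have hfin : dist b₁ b₂ * (1 + h * K_A) * (1 + h * K_D) * (1 + h * K_A) ≤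
      dist b₁ b₂ * (1 + h * K) ^ 3 := by
    calc dist b₁ b₂ * (1 + h * K_A) * (1 + h * K_D) * (1 + h * K_A)
        = dist b₁ b₂ * ((1 + h * K_A) * (1 + h * K_D) * (1 + h * K_A)) := by ring
      _ ≤ dist b₁ b₂ * (1 + h * K) ^ 3 := mul_le_mul_of_nonneg_left hprod hd0
  have hc : C_d * h ^ (1 + α) * (1 + h * K_A) ≤ C_d * h ^ (1 + α) * (1 + h * K) :=
    mul_le_mul_of_nonneg_left hAM hCt0
  nlinarith [mul_le_mul_of_nonneg_right hstep hD0,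
    mul_le_mul_of_nonneg_left hA2 hg0]
end

section
/- Let X be a metric space and Φ an arc field satisfying Conditions A (constant K_A), B, C on a ball B(a,r) around a ∈ X with time window [t,T]. Assume ρ(a,t;r,l) := sup{Lipschitz constants of h ↦ Φ^s_h(y) : y ∈ B(a,r), |s−t| ≤ l} is finite and positive, and B(a,r)-closure is complete. Set c := min{r/ρ(a,t;r,l), l}. Then there exists a curve σ : [t, t+c) → X with σ(t) = a such that for every s ∈ [t, t+c): lim_{h→0⁺} d(σ(s+h), Φ^s_h(σ(s)))/h = 0. -/
/-!
Approximate by Euler polygons `ξ_δ`, which on each cell `[t + kδ, t + (k+1)δ]` follow the arc of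
`Φ` issued from the `k`-th vertex at the time `t + kδ`. They move at speed `≤ ρ`, so up to time
`t + c` they stay in `B(a, r)`. Along a step of length `h`, Conditions B and C keep `ξ_δ` within
`h (η |K_B| + |C| D^α)` of the arc `Φ_s(ξ_δ(s), ·)`, where `g ≤ η` on `(0, D]²`, while Condition A
propagates earlier errors with a factor `1 + h |K_A|`. A discrete Grönwall argument over the cells
gives, uniformly in `δ`,
  `d(ξ_δ(s + h), Φ_s(ξ_δ(s), h)) ≤ (2η|K_B| + |C|D^α) h e^{|K_A| h}`,
and the same argument comparing two polygons shows that `ξ_δ(u)` is Cauchy as `δ → 0⁺`. The limit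
`σ` inherits the estimate with `D = h`; letting `h → 0` and then `η → 0` gives tangency.
-/

open Set Filter Topology Metric

theorem forall_mem_Icc_of_cell_step {P : ℝ → Prop} {t δ s u : ℝ} (hδ : 0 < δ) (hts : t ≤ s)
    (hs : P s)
    (step : ∀ (k : ℕ) (v w : ℝ), s ≤ v → v ≤ w → w ≤ u → t + k * δ ≤ v →
      w ≤ t + (k + 1) * δ → (∀ x ∈ Icc s v, P x) → P w) :
    ∀ x ∈ Icc s u, P x := by
  suffices H : ∀ k : ℕ, ∀ x ∈ Icc s u, x ≤ t + k * δ → P x by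
    intro x hx
    refine H ⌈(x - t) / δ⌉₊ x hx ?_
    have := (div_le_iff₀ hδ).1 (Nat.le_ceil ((x - t) / δ))
    linarith
  intro k
  induction k with
  | zero =>
    intro x hx hxt
    obtain rfl : x = s := le_antisymm (by simp at hxt; linarith) hx.1
    exact hs
  | succ k ih =>
    intro x hx hxk
    by_cases hx' : x ≤ t + k * δ
    · exact ih x hx hx'
    refine step k (max s (t + k * δ)) x (le_max_left _ _) (max_le hx.1 (by linarith)) hx.2
      (le_max_right _ _) (by push_cast at hxk; linarith) fun y hy => ?_
    rcases le_max_iff.1 hy.2 with hys | hyk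
    · rwa [le_antisymm hys hy.1]
    · exact ih y ⟨hy.1, by linarith [hy.2, hx.2]⟩ hyk

theorem le_mul_exp_of_cell_step {e : ℝ → ℝ} {t δ s u K M : ℝ} (hδ : 0 < δ) (hts : t ≤ s)
    (hsu : s ≤ u) (hK : 0 ≤ K) (hM : 0 ≤ M) (hs : e s ≤ 0)
    (step : ∀ (k : ℕ) (v w : ℝ), s ≤ v → v ≤ w → w ≤ u → t + k * δ ≤ v →
      w ≤ t + (k + 1) * δ → e w ≤ e v * (1 + (w - v) * K) + (w - v) * M) :
    e u ≤ M * (u - s) * Real.exp (K * (u - s)) := by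
  refine forall_mem_Icc_of_cell_step (P := fun x => e x ≤ M * (x - s) * Real.exp (K * (x - s)))
    hδ hts (by simpa using hs) (fun k v w hsv hvw hwu hkv hwk IH => ?_) u ⟨hsu, le_rfl⟩
  have hv : e v ≤ M * (v - s) * Real.exp (K * (v - s)) := IH v ⟨hsv, le_rfl⟩
  have hgrowth : 1 + (w - v) * K ≤ Real.exp (K * (w - v)) := by
    linarith [Real.add_one_le_exp (K * (w - v))]
  have hone : 1 ≤ Real.exp (K * (w - s)) := Real.one_le_exp (by nlinarith)
  calc e w ≤ e v * (1 + (w - v) * K) + (w - v) * M := step k v w hsv hvw hwu hkv hwk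
    _ ≤ M * (v - s) * Real.exp (K * (v - s)) * Real.exp (K * (w - v))
          + (w - v) * M * Real.exp (K * (w - s)) := by
        refine add_le_add (mul_le_mul hv hgrowth (by nlinarith) (by positivity)) ?_
        exact le_mul_of_one_le_right (by nlinarith) hone
    _ = M * (w - s) * Real.exp (K * (w - s)) := by
        rw [mul_assoc _ (Real.exp _), ← Real.exp_add]; ring_nf

theorem tendsto_zero_of_forall_eventually_le {α : Type*} {l : Filter α} {F G : α → ℝ} {L : ℝ}
    (hG : Tendsto G l (𝓝 0)) (hF : ∀ᶠ x in l, 0 ≤ F x)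
    (h : ∀ η > 0, ∀ᶠ x in l, F x ≤ L * η + G x) : Tendsto F l (𝓝 0) := by
  refine tendsto_order.2 ⟨fun b hb => hF.mono fun x hx => hb.trans_le hx, fun b hb => ?_⟩
  have hη : 0 < b / (2 * (|L| + 1)) := by positivity
  have hLη : L * (b / (2 * (|L| + 1))) < b / 2 := by
    rw [mul_div_assoc', div_lt_div_iff₀ (by positivity) two_pos]
    nlinarith [le_abs_self L]
  filter_upwards [h _ hη, hG.eventually (gt_mem_nhds (half_pos hb))] with x hx hGx
  linarith

theorem exists_forall_Ioc_le_of_tendsto {g : ℝ → ℝ → ℝ}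
    (hg : Tendsto (fun q : ℝ × ℝ => g q.1 q.2) (𝓝[>] 0 ×ˢ 𝓝[>] 0) (𝓝 0)) {η : ℝ} (hη : 0 < η) :
    ∃ D > 0, ∀ p ∈ Ioc 0 D, ∀ q ∈ Ioc 0 D, g p q ≤ η := by
  obtain ⟨D, hD, hsub⟩ :=
    (nhdsGT_basis_Ioc (0 : ℝ)).prod_self.eventually_iff.1 (hg.eventually (gt_mem_nhds hη))
  exact ⟨D, hD, fun p hp q hq => (hsub (mk_mem_prod hp hq)).le⟩

namespace ArcField

variable {X : Type*}

/-- `condA`, `condB`, `condC` are Conditions A, B, C on `B(a, r) × [t, T]`. -/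
structure IsExistenceSetting [MetricSpace X] (Φ : ℝ → X → ℝ → X) (a : X)
    (t r l T ρ c ε K_A K_B C α : ℝ) (g : ℝ → ℝ → ℝ) : Prop where
  rho_pos : 0 < ρ
  rho_mul_le : ρ * c ≤ r
  le_l : c ≤ l
  add_le : t + c ≤ T
  eps_pos : 0 < ε
  eps_le_one : ε ≤ 1
  alpha_pos : 0 < α
  zero : ∀ (s : ℝ) (x : X), Φ s x 0 = x
  speed : ∀ y ∈ closedBall a r, ∀ s : ℝ, |s - t| ≤ l →
    ∀ h₁ ∈ Icc (0 : ℝ) 1, ∀ h₂ ∈ Icc (0 : ℝ) 1, dist (Φ s y h₁) (Φ s y h₂) ≤ ρ * |h₁ - h₂|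
  condA : ∀ x ∈ ball a r, ∀ y ∈ ball a r, ∀ h ∈ Icc 0 ε,
    ∀ s ∈ Icc t T, dist (Φ s x h) (Φ s y h) ≤ dist x y * (1 + h * K_A)
  condB : ∀ b ∈ ball a r, ∀ l' ∈ Icc 0 ε, ∀ h ∈ Icc 0 ε,
    ∀ s ∈ Icc t T, dist (Φ s b (l' + h)) (Φ s (Φ s b l') h) ≤ h * g l' h * K_B
  condC : ∀ b ∈ ball a r, ∀ h ∈ Icc 0 ε, ∀ s₁ ∈ Icc t T,
    ∀ s₂ ∈ Icc t T, dist (Φ s₁ b h) (Φ s₂ b h) ≤ C * h * |s₁ - s₂| ^ α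
  g_nonneg : ∀ u v, 0 ≤ g u v
  g_tendsto : Tendsto (fun q : ℝ × ℝ => g q.1 q.2) (𝓝[>] 0 ×ˢ 𝓝[>] 0) (𝓝 0)

noncomputable def eulerPt (Φ : ℝ → X → ℝ → X) (a : X) (t δ : ℝ) : ℕ → X
  | 0 => a
  | k + 1 => Φ (t + k * δ) (eulerPt Φ a t δ k) δ

noncomputable def eulerCurve (Φ : ℝ → X → ℝ → X) (a : X) (t δ u : ℝ) : X :=
  Φ (t + ⌊(u - t) / δ⌋₊ * δ) (eulerPt Φ a t δ ⌊(u - t) / δ⌋₊) (u - (t + ⌊(u - t) / δ⌋₊ * δ))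

variable {Φ : ℝ → X → ℝ → X} {a : X} {t δ : ℝ}

theorem eulerCurve_self (hΦ0 : ∀ s x, Φ s x 0 = x) : eulerCurve Φ a t δ t = a := by
  simp [eulerCurve, eulerPt, hΦ0]

theorem eulerCurve_eq_of_mem_cell (hδ : 0 < δ) (hΦ0 : ∀ s x, Φ s x 0 = x) (k : ℕ) {w : ℝ}
    (hw : w ∈ Icc (t + k * δ) (t + (k + 1) * δ)) :
    eulerCurve Φ a t δ w = Φ (t + k * δ) (eulerPt Φ a t δ k) (w - (t + k * δ)) := by
  rcases hw.2.lt_or_eq with hlt | rfl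
  · have hk : ⌊(w - t) / δ⌋₊ = k := by
      rw [Nat.floor_eq_iff (div_nonneg (by nlinarith [hw.1]) hδ.le), le_div_iff₀ hδ,
        div_lt_iff₀ hδ]
      constructor <;> linarith [hw.1]
    rw [eulerCurve, hk]
  · have hk : ⌊(t + (k + 1) * δ - t) / δ⌋₊ = k + 1 := by
      rw [add_sub_cancel_left, mul_div_cancel_right₀ _ hδ.ne']
      exact_mod_cast Nat.floor_natCast (k + 1)
    rw [eulerCurve, hk]
    push_cast
    rw [sub_self, hΦ0, eulerPt]
    ring_nf

theorem eulerCurve_grid (hδ : 0 < δ) (hΦ0 : ∀ s x, Φ s x 0 = x) (k : ℕ) :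
    eulerCurve Φ a t δ (t + k * δ) = eulerPt Φ a t δ k := by
  rw [eulerCurve_eq_of_mem_cell hδ hΦ0 k ⟨le_rfl, by nlinarith⟩, sub_self, hΦ0]

namespace IsExistenceSetting

variable [MetricSpace X] {t r l T ρ c ε K_A K_B C α : ℝ} {g : ℝ → ℝ → ℝ}
  (H : IsExistenceSetting Φ a t r l T ρ c ε K_A K_B C α g)
include H

theorem mem_ball_of_dist_le {y : X} {u : ℝ} (hy : dist y a ≤ ρ * (u - t)) (hu : u < t + c) :
    y ∈ ball a r :=
  mem_ball.2 (by nlinarith [H.rho_pos, H.rho_mul_le])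

theorem dist_arc_le {y : X} {s h : ℝ} (hy : y ∈ closedBall a r) (hs : |s - t| ≤ l)
    (hh : h ∈ Icc (0 : ℝ) 1) : dist (Φ s y h) y ≤ ρ * h := by
  simpa [H.zero, abs_of_nonneg hh.1] using H.speed y hy s hs h hh 0 ⟨le_rfl, zero_le_one⟩

theorem dist_eulerCurve_le (hδ : 0 < δ) (hδ1 : δ ≤ 1) {u : ℝ} (hu : u ∈ Icc t (t + c)) :
    dist (eulerCurve Φ a t δ u) a ≤ ρ * (u - t) := by
  refine forall_mem_Icc_of_cell_step (P := fun x => dist (eulerCurve Φ a t δ x) a ≤ ρ * (x - t))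
    hδ le_rfl (by simp [eulerCurve_self H.zero]) (fun k v w htv hvw hwc hkv hwk IH => ?_) u hu
  have hk : 0 ≤ (k : ℝ) * δ := by positivity
  have hvertex := IH (t + k * δ) ⟨by linarith, hkv⟩
  rw [eulerCurve_grid hδ H.zero] at hvertex
  have hmem : eulerPt Φ a t δ k ∈ closedBall a r :=
    mem_closedBall.2 (by nlinarith [H.rho_pos, H.rho_mul_le])
  have harc := H.dist_arc_le hmem (s := t + k * δ) (h := w - (t + k * δ))
    (by rw [add_sub_cancel_left, abs_of_nonneg hk]; linarith [H.le_l])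
    ⟨by linarith, by linarith⟩
  calc dist (eulerCurve Φ a t δ w) a
      ≤ dist (eulerCurve Φ a t δ w) (eulerPt Φ a t δ k) + dist (eulerPt Φ a t δ k) a :=
        dist_triangle _ _ _
    _ ≤ ρ * (w - (t + k * δ)) + ρ * (t + k * δ - t) := by
        rw [eulerCurve_eq_of_mem_cell hδ H.zero k ⟨by linarith, hwk⟩]
        exact add_le_add harc hvertex
    _ = ρ * (w - t) := by ring

theorem eulerCurve_mem_ball (hδ : 0 < δ) (hδε : δ ≤ ε) {u : ℝ} (hu : u ∈ Ico t (t + c)) :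
    eulerCurve Φ a t δ u ∈ ball a r :=
  H.mem_ball_of_dist_le (H.dist_eulerCurve_le hδ (hδε.trans H.eps_le_one) ⟨hu.1, hu.2.le⟩) hu.2

theorem dist_condB_le {η D s l' h : ℝ} {b : X} (hη : 0 ≤ η)
    (hg : ∀ p ∈ Ioc 0 D, ∀ q ∈ Ioc 0 D, g p q ≤ η) (hb : b ∈ ball a r) (hs : s ∈ Icc t T)
    (hl' : l' ∈ Icc 0 ε) (hh : h ∈ Icc 0 ε) (hl'D : l' ≤ D) (hhD : h ≤ D) :
    dist (Φ s b (l' + h)) (Φ s (Φ s b l') h) ≤ h * (η * |K_B|) := by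
  -- `g` is only controlled on `(0, D]²`; for `l' = 0` or `h = 0` the two points coincide.
  rcases hl'.1.eq_or_lt with rfl | hl'0
  · simp only [zero_add, H.zero, dist_self]
    exact mul_nonneg hh.1 (by positivity)
  rcases hh.1.eq_or_lt with rfl | hh0
  · simp [H.zero]
  calc dist (Φ s b (l' + h)) (Φ s (Φ s b l') h) ≤ h * g l' h * K_B := H.condB b hb l' hl' h hh s hs
    _ ≤ h * (g l' h * |K_B|) := by
        rw [mul_assoc]
        exact mul_le_mul_of_nonneg_left
          (mul_le_mul_of_nonneg_left (le_abs_self _) (H.g_nonneg _ _)) hh.1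
    _ ≤ h * (η * |K_B|) := by gcongr; exact hg l' ⟨hl'0, hl'D⟩ h ⟨hh0, hhD⟩

theorem dist_condC_le {D s₁ s₂ h : ℝ} {b : X} (hb : b ∈ ball a r) (hh : h ∈ Icc 0 ε)
    (hs₁ : s₁ ∈ Icc t T) (hs₂ : s₂ ∈ Icc t T) (hD : |s₁ - s₂| ≤ D) :
    dist (Φ s₁ b h) (Φ s₂ b h) ≤ h * (|C| * D ^ α) := by
  calc dist (Φ s₁ b h) (Φ s₂ b h) ≤ C * h * |s₁ - s₂| ^ α := H.condC b hb h hh s₁ hs₁ s₂ hs₂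
    _ ≤ h * (|C| * D ^ α) := by
        rw [mul_comm C, mul_assoc]
        gcongr
        · exact hh.1
        · exact le_abs_self _
        · exact H.alpha_pos.le

theorem dist_condA_le {s h : ℝ} {x y : X} (hx : x ∈ ball a r) (hy : y ∈ ball a r)
    (hh : h ∈ Icc 0 ε) (hs : s ∈ Icc t T) :
    dist (Φ s x h) (Φ s y h) ≤ dist x y * (1 + h * |K_A|) :=
  (H.condA x hx y hy h hh s hs).trans
    (mul_le_mul_of_nonneg_left (by nlinarith [le_abs_self K_A, hh.1]) dist_nonneg)

theorem dist_eulerCurve_le_of_mem_cell {η D v w s : ℝ} (hη : 0 ≤ η)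
    (hg : ∀ p ∈ Ioc 0 D, ∀ q ∈ Ioc 0 D, g p q ≤ η) (hδ : 0 < δ) (hδε : δ ≤ ε) (hδD : δ ≤ D)
    (k : ℕ) (hkv : t + k * δ ≤ v) (hvw : v ≤ w) (hwk : w ≤ t + (k + 1) * δ) (hwc : w < t + c)
    (hs : s ∈ Icc t T) (hks : |t + k * δ - s| ≤ D) :
    dist (eulerCurve Φ a t δ w) (Φ s (eulerCurve Φ a t δ v) (w - v))
      ≤ (w - v) * (η * |K_B| + |C| * D ^ α) := by
  have hk : 0 ≤ (k : ℝ) * δ := by positivity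
  set q := t + k * δ
  have hvertex : eulerPt Φ a t δ k ∈ ball a r := by
    rw [← eulerCurve_grid hδ H.zero]
    exact H.eulerCurve_mem_ball hδ hδε ⟨by linarith, by linarith⟩
  have hq : q ∈ Icc t T := ⟨by linarith, by linarith [H.add_le]⟩
  have hwv : w - v ∈ Icc 0 ε := ⟨by linarith, by linarith⟩
  have hsplit := H.dist_condB_le hη hg hvertex hq (l' := v - q) (h := w - v)
    ⟨by linarith, by linarith⟩ hwv (by linarith) (by linarith)
  rw [sub_add_sub_cancel', ← eulerCurve_eq_of_mem_cell hδ H.zero k ⟨hkv.trans hvw, hwk⟩,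
    ← eulerCurve_eq_of_mem_cell hδ H.zero k ⟨hkv, hvw.trans hwk⟩] at hsplit
  have htime := H.dist_condC_le
    (H.eulerCurve_mem_ball hδ hδε (u := v) ⟨by linarith, by linarith⟩) hwv hq hs hks
  calc _ ≤ dist (eulerCurve Φ a t δ w) (Φ q (eulerCurve Φ a t δ v) (w - v))
        + dist (Φ q (eulerCurve Φ a t δ v) (w - v)) (Φ s (eulerCurve Φ a t δ v) (w - v)) :=
        dist_triangle _ _ _
    _ ≤ (w - v) * (η * |K_B|) + (w - v) * (|C| * D ^ α) := add_le_add hsplit htime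
    _ = (w - v) * (η * |K_B| + |C| * D ^ α) := by ring

theorem dist_eulerCurve_add_le {η D s h : ℝ} (hη : 0 ≤ η)
    (hg : ∀ p ∈ Ioc 0 D, ∀ q ∈ Ioc 0 D, g p q ≤ η) (hδ : 0 < δ) (hδε : δ ≤ ε) (hδD : δ ≤ D)
    (hts : t ≤ s) (hh : h ∈ Icc 0 ε) (hhD : h ≤ D) (hsh : s + h < t + c) :
    dist (eulerCurve Φ a t δ (s + h)) (Φ s (eulerCurve Φ a t δ s) h)
      ≤ (2 * η * |K_B| + |C| * D ^ α) * h * Real.exp (|K_A| * h) := by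
  set ξ := eulerCurve Φ a t δ
  have hs : s ∈ Icc t T := ⟨hts, by linarith [H.add_le, hh.1]⟩
  have hξs : ξ s ∈ ball a r := H.eulerCurve_mem_ball hδ hδε ⟨hts, by linarith [hh.1]⟩
  have hD : 0 ≤ D := hδ.le.trans hδD
  have hgron := le_mul_exp_of_cell_step (e := fun u => dist (ξ u) (Φ s (ξ s) (u - s)))
    (u := s + h) (M := 2 * η * |K_B| + |C| * D ^ α) hδ hts (by linarith [hh.1]) (abs_nonneg K_A)
    (by have := Real.rpow_nonneg hD α; positivity) (by simp [H.zero]) ?_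
  · simpa using hgron
  intro k v w hsv hvw hwu hkv hwk
  have hwv : w - v ∈ Icc 0 ε := ⟨by linarith, by linarith [hh.2]⟩
  have hvs : v - s ∈ Icc 0 ε := ⟨by linarith, by linarith [hh.2]⟩
  have hflow : Φ s (ξ s) (v - s) ∈ ball a r := by
    refine H.mem_ball_of_dist_le (u := v) ?_ (by linarith)
    have hξs' := H.dist_eulerCurve_le hδ (hδε.trans H.eps_le_one) ⟨hts, by linarith [hh.1]⟩
    have harc := H.dist_arc_le (ball_subset_closedBall hξs) (s := s)
      (by rw [abs_of_nonneg (by linarith)]; linarith [H.le_l, hh.1])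
      ⟨hvs.1, hvs.2.trans H.eps_le_one⟩
    calc dist (Φ s (ξ s) (v - s)) a ≤ dist (Φ s (ξ s) (v - s)) (ξ s) + dist (ξ s) a :=
          dist_triangle _ _ _
      _ ≤ ρ * (v - s) + ρ * (s - t) := add_le_add harc hξs'
      _ = ρ * (v - t) := by ring
  have hcell := H.dist_eulerCurve_le_of_mem_cell hη hg hδ hδε hδD k hkv hvw hwk (by linarith) hs
    (abs_le.2 ⟨by linarith, by linarith⟩)
  have hA := H.dist_condA_le (H.eulerCurve_mem_ball hδ hδε (u := v) ⟨by linarith, by linarith⟩)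
    hflow hwv hs
  have hB := H.dist_condB_le hη hg hξs hs hvs hwv (by linarith) (by linarith)
  rw [sub_add_sub_cancel'] at hB
  calc dist (ξ w) (Φ s (ξ s) (w - s))
      ≤ dist (ξ w) (Φ s (ξ v) (w - v)) + dist (Φ s (ξ v) (w - v)) (Φ s (Φ s (ξ s) (v - s)) (w - v))
        + dist (Φ s (Φ s (ξ s) (v - s)) (w - v)) (Φ s (ξ s) (w - s)) := dist_triangle4 _ _ _ _
    _ ≤ (w - v) * (η * |K_B| + |C| * D ^ α) + dist (ξ v) (Φ s (ξ s) (v - s)) * (1 + (w - v) * |K_A|)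
        + (w - v) * (η * |K_B|) := add_le_add (add_le_add hcell hA) (by rw [dist_comm]; exact hB)
    _ = dist (ξ v) (Φ s (ξ s) (v - s)) * (1 + (w - v) * |K_A|)
        + (w - v) * (2 * η * |K_B| + |C| * D ^ α) := by ring

theorem dist_eulerCurve_eulerCurve_le {η D δ₁ δ₂ u : ℝ} (hη : 0 ≤ η)
    (hg : ∀ p ∈ Ioc 0 D, ∀ q ∈ Ioc 0 D, g p q ≤ η) (hδ₁ : 0 < δ₁) (hδ₁ε : δ₁ ≤ ε)
    (hδ₁D : δ₁ ≤ D) (hδ₂ : 0 < δ₂) (hδ₂ε : δ₂ ≤ ε) (hδ₂D : δ₂ ≤ D) (hu : u ∈ Ico t (t + c)) :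
    dist (eulerCurve Φ a t δ₁ u) (eulerCurve Φ a t δ₂ u)
      ≤ 2 * Real.exp |K_A| * (2 * η * |K_B| + |C| * D ^ α) * (c * Real.exp (|K_A| * c)) := by
  set M := 2 * η * |K_B| + |C| * D ^ α
  have hM : 0 ≤ M := by have := Real.rpow_nonneg (hδ₁.le.trans hδ₁D) α; positivity
  have hgron := le_mul_exp_of_cell_step
    (e := fun x => dist (eulerCurve Φ a t δ₁ x) (eulerCurve Φ a t δ₂ x)) (s := t) (u := u)
    (M := 2 * Real.exp |K_A| * M) hδ₁ le_rfl hu.1 (abs_nonneg K_A) (by positivity)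
    (by simp [eulerCurve_self H.zero]) ?_
  · rw [mul_assoc _ (u - t)] at hgron
    refine hgron.trans ?_
    have hut : u - t ≤ c := by linarith [hu.2]
    gcongr
    linarith [hu.1]
  intro k v w htv hvw hwu hkv hwk
  have hwv : w - v ∈ Icc 0 ε := ⟨by linarith, by linarith⟩
  have hv : v ∈ Icc t T := ⟨htv, by linarith [hu.2, H.add_le]⟩
  have hcell := H.dist_eulerCurve_le_of_mem_cell hη hg hδ₁ hδ₁ε hδ₁D k hkv hvw hwk
    (by linarith [hu.2]) hv (abs_le.2 ⟨by linarith, by linarith⟩)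
  have hA := H.dist_condA_le (H.eulerCurve_mem_ball hδ₁ hδ₁ε (u := v) ⟨htv, by linarith [hu.2]⟩)
    (H.eulerCurve_mem_ball hδ₂ hδ₂ε (u := v) ⟨htv, by linarith [hu.2]⟩) hwv hv
  have hfine := H.dist_eulerCurve_add_le hη hg hδ₂ hδ₂ε hδ₂D htv hwv (by linarith)
    (by rw [add_sub_cancel]; linarith [hu.2])
  rw [add_sub_cancel] at hfine
  have hexp : Real.exp (|K_A| * (w - v)) ≤ Real.exp |K_A| :=
    Real.exp_le_exp.2 (mul_le_of_le_one_right (abs_nonneg _) (by linarith [H.eps_le_one]))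
  have hM' : η * |K_B| + |C| * D ^ α ≤ M * Real.exp |K_A| :=
    (show _ ≤ M by nlinarith [abs_nonneg K_B]).trans
      (le_mul_of_one_le_right hM (Real.one_le_exp (abs_nonneg _)))
  calc dist (eulerCurve Φ a t δ₁ w) (eulerCurve Φ a t δ₂ w)
      ≤ dist (eulerCurve Φ a t δ₁ w) (Φ v (eulerCurve Φ a t δ₁ v) (w - v))
        + dist (Φ v (eulerCurve Φ a t δ₁ v) (w - v)) (Φ v (eulerCurve Φ a t δ₂ v) (w - v))
        + dist (Φ v (eulerCurve Φ a t δ₂ v) (w - v)) (eulerCurve Φ a t δ₂ w) :=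
        dist_triangle4 _ _ _ _
    _ ≤ (w - v) * (M * Real.exp |K_A|)
        + dist (eulerCurve Φ a t δ₁ v) (eulerCurve Φ a t δ₂ v) * (1 + (w - v) * |K_A|)
        + M * (w - v) * Real.exp |K_A| := by
        refine add_le_add (add_le_add ?_ hA) ?_
        · exact hcell.trans (mul_le_mul_of_nonneg_left hM' hwv.1)
        · rw [dist_comm]
          exact hfine.trans (mul_le_mul_of_nonneg_left hexp (mul_nonneg hM hwv.1))
    _ = dist (eulerCurve Φ a t δ₁ v) (eulerCurve Φ a t δ₂ v) * (1 + (w - v) * |K_A|)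
        + (w - v) * (2 * Real.exp |K_A| * M) := by ring

theorem continuousAt_arc {s h : ℝ} {y : X} (hy : y ∈ ball a r) (hh : h ∈ Icc 0 ε)
    (hs : s ∈ Icc t T) : ContinuousAt (fun x => Φ s x h) y := by
  refine ((LipschitzOnWith.of_dist_le_mul (K := Real.toNNReal (1 + h * |K_A|))
    fun x hx z hz => ?_).continuousOn).continuousAt (isOpen_ball.mem_nhds hy)
  rw [Real.coe_toNNReal _ (by nlinarith [abs_nonneg K_A, hh.1]), mul_comm]
  exact H.dist_condA_le hx hz hh hs

theorem exists_tendsto_eulerCurve (hcomplete : IsComplete (closedBall a r)) {u : ℝ}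
    (hu : u ∈ Ico t (t + c)) :
    ∃ p, Tendsto (fun δ => eulerCurve Φ a t δ u) (𝓝[>] 0) (𝓝 p) := by
  have hmem : ∀ᶠ δ in 𝓝[>] (0 : ℝ), eulerCurve Φ a t δ u ∈ closedBall a r :=
    mem_of_superset (Ioc_mem_nhdsGT H.eps_pos) fun δ hδ =>
      ball_subset_closedBall (H.eulerCurve_mem_ball hδ.1 hδ.2 hu)
  have hcauchy : Cauchy (map (fun δ => eulerCurve Φ a t δ u) (𝓝[>] 0)) := by
    rw [cauchy_map_iff', tendsto_uniformity_iff_dist_tendsto_zero]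
    refine tendsto_zero_of_forall_eventually_le
      (L := 2 * |K_B| * (2 * Real.exp |K_A| * (c * Real.exp (|K_A| * c))))
      (G := fun p : ℝ × ℝ =>
        2 * Real.exp |K_A| * (c * Real.exp (|K_A| * c)) * (|C| * max p.1 p.2 ^ α))
      ?_ (Eventually.of_forall fun _ => dist_nonneg) fun η hη => ?_
    · have hmax : Tendsto (fun p : ℝ × ℝ => max p.1 p.2) (𝓝[>] 0 ×ˢ 𝓝[>] 0) (𝓝 0) := by
        have hle : 𝓝[>] (0 : ℝ) ×ˢ 𝓝[>] (0 : ℝ) ≤ 𝓝 ((0 : ℝ), (0 : ℝ)) := by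
          rw [nhds_prod_eq]
          exact Filter.prod_mono nhdsWithin_le_nhds nhdsWithin_le_nhds
        simpa using (continuous_max.tendsto ((0 : ℝ), (0 : ℝ))).mono_left hle
      simpa using ((hmax.rpow_const_nhds_zero H.alpha_pos).const_mul |C|).const_mul
        (2 * Real.exp |K_A| * (c * Real.exp (|K_A| * c)))
    obtain ⟨D, hD, hg⟩ := exists_forall_Ioc_le_of_tendsto H.g_tendsto hη
    have hnhds := Ioc_mem_nhdsGT (lt_min H.eps_pos hD)
    filter_upwards [prod_mem_prod hnhds hnhds] with ⟨δ₁, δ₂⟩ ⟨hδ₁, hδ₂⟩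
    have hmaxD : max δ₁ δ₂ ≤ D := max_le (hδ₁.2.trans (min_le_right _ _))
      (hδ₂.2.trans (min_le_right _ _))
    refine (H.dist_eulerCurve_eulerCurve_le hη.le (D := max δ₁ δ₂)
      (fun p hp q hq => hg p ⟨hp.1, hp.2.trans hmaxD⟩ q ⟨hq.1, hq.2.trans hmaxD⟩)
      hδ₁.1 (hδ₁.2.trans (min_le_left _ _)) (le_max_left _ _)
      hδ₂.1 (hδ₂.2.trans (min_le_left _ _)) (le_max_right _ _) hu).trans (le_of_eq ?_)
    ring
  obtain ⟨p, -, hp⟩ := hcomplete _ hcauchy (le_principal_iff.2 hmem)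
  exact ⟨p, hp⟩

theorem dist_arc_le_of_tendsto {σ : ℝ → X}
    (hσ : ∀ u ∈ Ico t (t + c), Tendsto (fun δ => eulerCurve Φ a t δ u) (𝓝[>] 0) (𝓝 (σ u)))
    {η D s h : ℝ} (hη : 0 ≤ η) (hg : ∀ p ∈ Ioc 0 D, ∀ q ∈ Ioc 0 D, g p q ≤ η) (hD : 0 < D)
    (hts : t ≤ s) (hh : h ∈ Icc 0 ε) (hhD : h ≤ D) (hsh : s + h < t + c) :
    dist (σ (s + h)) (Φ s (σ s) h)
      ≤ (2 * η * |K_B| + |C| * D ^ α) * h * Real.exp (|K_A| * h) := by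
  have hs : s ∈ Ico t (t + c) := ⟨hts, by linarith [hh.1]⟩
  have hσs : σ s ∈ ball a r := by
    refine H.mem_ball_of_dist_le (le_of_tendsto ((hσ s hs).dist tendsto_const_nhds) ?_) hs.2
    filter_upwards [Ioc_mem_nhdsGT H.eps_pos] with δ hδ
    exact H.dist_eulerCurve_le hδ.1 (hδ.2.trans H.eps_le_one) ⟨hs.1, hs.2.le⟩
  have hlim := (hσ (s + h) ⟨by linarith [hh.1], hsh⟩).dist
    ((H.continuousAt_arc hσs hh ⟨hts, by linarith [H.add_le, hh.1]⟩).tendsto.comp (hσ s hs))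
  refine le_of_tendsto hlim ?_
  filter_upwards [Ioc_mem_nhdsGT (lt_min H.eps_pos hD)] with δ hδ
  exact H.dist_eulerCurve_add_le hη hg hδ.1 (hδ.2.trans (min_le_left _ _))
    (hδ.2.trans (min_le_right _ _)) hts hh hhD hsh

theorem tendsto_dist_arc_div {σ : ℝ → X}
    (hσ : ∀ u ∈ Ico t (t + c), Tendsto (fun δ => eulerCurve Φ a t δ u) (𝓝[>] 0) (𝓝 (σ u)))
    {s : ℝ} (hs : s ∈ Ico t (t + c)) :
    Tendsto (fun h => dist (σ (s + h)) (Φ s (σ s) h) / h) (𝓝[>] 0) (𝓝 0) := by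
  refine tendsto_zero_of_forall_eventually_le (L := 2 * |K_B| * Real.exp |K_A|)
    (G := fun h => |C| * h ^ α * Real.exp |K_A|) ?_ ?_ fun η (hη : 0 < η) => ?_
  · simpa using (((tendsto_id.mono_left nhdsWithin_le_nhds).rpow_const_nhds_zero
      H.alpha_pos).const_mul |C|).mul_const (Real.exp |K_A|)
  · filter_upwards [self_mem_nhdsWithin] with h (hh : 0 < h)
    positivity
  obtain ⟨D, hD, hg⟩ := exists_forall_Ioc_le_of_tendsto H.g_tendsto hη
  filter_upwards [Ioo_mem_nhdsGT (lt_min (lt_min H.eps_pos hD) (sub_pos.2 hs.2))] with h hh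
  have hhε : h ≤ ε := hh.2.le.trans ((min_le_left _ _).trans (min_le_left _ _))
  have hhD : h ≤ D := hh.2.le.trans ((min_le_left _ _).trans (min_le_right _ _))
  have hsh : s + h < t + c := by linarith [hh.2.trans_le (min_le_right _ _)]
  have hbound := H.dist_arc_le_of_tendsto hσ hη.le
    (fun p hp q hq => hg p ⟨hp.1, hp.2.trans hhD⟩ q ⟨hq.1, hq.2.trans hhD⟩) hh.1 hs.1
    ⟨hh.1.le, hhε⟩ le_rfl hsh
  have hexp : Real.exp (|K_A| * h) ≤ Real.exp |K_A| :=
    Real.exp_le_exp.2 (mul_le_of_le_one_right (abs_nonneg _) (hhε.trans H.eps_le_one))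
  rw [div_le_iff₀ hh.1]
  calc dist (σ (s + h)) (Φ s (σ s) h)
      ≤ (2 * η * |K_B| + |C| * h ^ α) * h * Real.exp (|K_A| * h) := hbound
    _ ≤ (2 * η * |K_B| + |C| * h ^ α) * h * Real.exp |K_A| := by
        have := Real.rpow_nonneg hh.1.le α
        have := hh.1
        gcongr
    _ = (2 * |K_B| * Real.exp |K_A| * η + |C| * h ^ α * Real.exp |K_A|) * h := by ring

end IsExistenceSetting

end ArcField

open ArcField in
theorem existence_solution_curve_general {X : Type*} [MetricSpace X]
    (Φ : ℝ → X → ℝ → X) (a : X) (t r l T ρ₀ K_A K_B C α ε : ℝ) (g : ℝ → ℝ → ℝ)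
    (hr : 0 < r) (hl : 0 < l) (hρ : 0 < ρ₀) (hε : ε ∈ Set.Ioc (0 : ℝ) 1)
    (hα : α ∈ Set.Ioo (0 : ℝ) 1)
    (hT : t + min (r / ρ₀) l ≤ T)
    (hΦ0 : ∀ (s : ℝ) (x : X), Φ s x 0 = x)
    (hspeed : ∀ y ∈ Metric.closedBall a r, ∀ s : ℝ, |s - t| ≤ l →
      ∀ h₁ ∈ Set.Icc (0 : ℝ) 1, ∀ h₂ ∈ Set.Icc (0 : ℝ) 1,
        dist (Φ s y h₁) (Φ s y h₂) ≤ ρ₀ * |h₁ - h₂|)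
    (hcomplete : IsComplete (Metric.closedBall a r))
    (hA : ∀ x ∈ Metric.ball a r, ∀ y ∈ Metric.ball a r, ∀ h ∈ Set.Icc 0 ε,
      ∀ s ∈ Set.Icc t T, dist (Φ s x h) (Φ s y h) ≤ dist x y * (1 + h * K_A))
    (hB : ∀ b ∈ Metric.ball a r, ∀ l' ∈ Set.Icc 0 ε, ∀ h ∈ Set.Icc 0 ε,
      ∀ s ∈ Set.Icc t T,
        dist (Φ s b (l' + h)) (Φ s (Φ s b l') h) ≤ h * g l' h * K_B)
    (hgnn : ∀ u v, 0 ≤ g u v)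
    (hg0 : Filter.Tendsto (fun q : ℝ × ℝ => g q.1 q.2)
      ((nhdsWithin 0 (Set.Ioi 0)) ×ˢ (nhdsWithin 0 (Set.Ioi 0))) (nhds 0))
    (hCcond : ∀ b ∈ Metric.ball a r, ∀ h ∈ Set.Icc 0 ε, ∀ s₁ ∈ Set.Icc t T,
      ∀ s₂ ∈ Set.Icc t T, dist (Φ s₁ b h) (Φ s₂ b h) ≤ C * h * |s₁ - s₂| ^ α) :
    ∃ σ : ℝ → X, σ t = a ∧
      ∀ s ∈ Set.Ico t (t + min (r / ρ₀) l),
        Filter.Tendsto (fun h => dist (σ (s + h)) (Φ s (σ s) h) / h)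
          (nhdsWithin 0 (Set.Ioi 0)) (nhds 0) := by
  set c := min (r / ρ₀) l
  have H : IsExistenceSetting Φ a t r l T ρ₀ c ε K_A K_B C α g :=
    ⟨hρ, (le_div_iff₀' hρ).1 (min_le_left _ _), min_le_right _ _, hT, hε.1, hε.2, hα.1,
      hΦ0, hspeed, hA, hB, hCcond, hgnn, hg0⟩
  have : Nonempty X := ⟨a⟩
  set σ : ℝ → X := fun u => limUnder (𝓝[>] 0) fun δ => eulerCurve Φ a t δ u
  have hσ : ∀ u ∈ Ico t (t + c), Tendsto (fun δ => eulerCurve Φ a t δ u) (𝓝[>] 0) (𝓝 (σ u)) :=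
    fun u hu => tendsto_nhds_limUnder (H.exists_tendsto_eulerCurve hcomplete hu)
  have hc : 0 < c := lt_min (div_pos hr hρ) hl
  refine ⟨σ, tendsto_nhds_unique (hσ t ⟨le_rfl, by linarith⟩) ?_,
    fun s hs => H.tendsto_dist_arc_div hσ hs⟩
  simpa only [eulerCurve_self hΦ0] using tendsto_const_nhds

/-- Existence of a solution curve for a time-dependent arc field (Theorem 2.8),
on the interval `[t, t + c)` with `c = min(r/ρ₀, l)`. -/
theorem existence_solution_curve {X : Type*} [MetricSpace X]
    (Φ : ℝ → X → ℝ → X) (a : X) (t r l T ρ₀ K_A K_B C α ε : ℝ) (g : ℝ → ℝ → ℝ)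
    (hr : 0 < r) (hl : 0 < l) (hρ : 0 < ρ₀) (hε : ε ∈ Set.Ioc (0 : ℝ) 1)
    (hα : α ∈ Set.Ioo (0 : ℝ) 1) (hCpos : 0 < C) (ht : 0 ≤ t)
    (hT : t + min (r / ρ₀) l ≤ T)
    (hΦ0 : ∀ (s : ℝ) (x : X), Φ s x 0 = x)
    (hspeed : ∀ y ∈ Metric.closedBall a r, ∀ s : ℝ, |s - t| ≤ l →
      ∀ h₁ ∈ Set.Icc (0 : ℝ) 1, ∀ h₂ ∈ Set.Icc (0 : ℝ) 1,
        dist (Φ s y h₁) (Φ s y h₂) ≤ ρ₀ * |h₁ - h₂|)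
    (hcomplete : IsComplete (Metric.closedBall a r))
    (hA : ∀ x ∈ Metric.ball a r, ∀ y ∈ Metric.ball a r, ∀ h ∈ Set.Icc 0 ε,
      ∀ s ∈ Set.Icc t T, dist (Φ s x h) (Φ s y h) ≤ dist x y * (1 + h * K_A))
    (hB : ∀ b ∈ Metric.ball a r, ∀ l' ∈ Set.Icc 0 ε, ∀ h ∈ Set.Icc 0 ε,
      ∀ s ∈ Set.Icc t T,
        dist (Φ s b (l' + h)) (Φ s (Φ s b l') h) ≤ h * g l' h * K_B)
    (hgnn : ∀ u v, 0 ≤ g u v)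
    (hg0 : Filter.Tendsto (fun q : ℝ × ℝ => g q.1 q.2)
      ((nhdsWithin 0 (Set.Ioi 0)) ×ˢ (nhdsWithin 0 (Set.Ioi 0))) (nhds 0))
    (hgsum : Summable fun i : ℕ => g (1 / 2 ^ i) (1 / 2 ^ i))
    (hCcond : ∀ b ∈ Metric.ball a r, ∀ h ∈ Set.Icc 0 ε, ∀ s₁ ∈ Set.Icc t T,
      ∀ s₂ ∈ Set.Icc t T, dist (Φ s₁ b h) (Φ s₂ b h) ≤ C * h * |s₁ - s₂| ^ α) :
    ∃ σ : ℝ → X, σ t = a ∧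
      ∀ s ∈ Set.Ico t (t + min (r / ρ₀) l),
        Filter.Tendsto (fun h => dist (σ (s + h)) (Φ s (σ s) h) / h)
          (nhdsWithin 0 (Set.Ioi 0)) (nhds 0) :=
  existence_solution_curve_general Φ a t r l T ρ₀ K_A K_B C α ε g hr hl hρ hε hα hT hΦ0 hspeed
    hcomplete hA hB hgnn hg0 hCcond
end

section
/- Let X be a metric space, Φ and Ψ arc fields, and ξ : [0,c) → X an L-Lipschitz curve. Suppose Φ and Ψ both satisfy Condition A with bound K_A and Condition C with constants C, α. Let 0 ≤ s' ≤ s < c with s − s' ≤ δ, and h > 0 with s + 2h < c. Then d(ξ(s+2h), Ψ^{s+h}_h(Φ^s_h(ξ(s)))) ≤ d(ξ(s'+2h), Ψ^{s'+h}_h(Φ^{s'}_h(ξ(s')))) + L·(s−s')·(1+(1+hK_A)²) + C·h·(s−s')^α·(2+hK_A). -/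
/-- Stability in the base point and time (inequality (3.24) of the existence proof
for the sum of two arc fields). -/
theorem base_point_time_stability {X : Type*} [MetricSpace X]
    (Φ Ψ : ℝ → X → ℝ → X) (K_A C α L c δ : ℝ)
    (hKA : 0 ≤ K_A) (hC : 0 < C) (hα : α ∈ Set.Ioo (0 : ℝ) 1)
    (hL : 0 ≤ L) (hc : 0 < c) (hδ : 0 < δ)
    (hAΦ : ∀ (s : ℝ) (x y : X) (h : ℝ), 0 ≤ h →
      dist (Φ s x h) (Φ s y h) ≤ dist x y * (1 + h * K_A))
    (hAΨ : ∀ (s : ℝ) (x y : X) (h : ℝ), 0 ≤ h →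
      dist (Ψ s x h) (Ψ s y h) ≤ dist x y * (1 + h * K_A))
    (hCΦ : ∀ (s₁ s₂ : ℝ) (b : X) (h : ℝ), 0 ≤ h →
      dist (Φ s₁ b h) (Φ s₂ b h) ≤ C * h * |s₁ - s₂| ^ α)
    (hCΨ : ∀ (s₁ s₂ : ℝ) (b : X) (h : ℝ), 0 ≤ h →
      dist (Ψ s₁ b h) (Ψ s₂ b h) ≤ C * h * |s₁ - s₂| ^ α)
    (ξ : ℝ → X)
    (hLip : ∀ s₁ ∈ Set.Ico (0 : ℝ) c, ∀ s₂ ∈ Set.Ico (0 : ℝ) c,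
      dist (ξ s₁) (ξ s₂) ≤ L * |s₁ - s₂|) :
    ∀ s' s h : ℝ, 0 ≤ s' → s' ≤ s → s < c → s - s' ≤ δ → 0 < h → s + 2 * h < c →
      dist (ξ (s + 2 * h)) (Ψ (s + h) (Φ s (ξ s) h) h) ≤
        dist (ξ (s' + 2 * h)) (Ψ (s' + h) (Φ s' (ξ s') h) h) +
          L * (s - s') * (1 + (1 + h * K_A) ^ 2) +
          C * h * (s - s') ^ α * (2 + h * K_A) := by
  intro s' s h hs'0 hss hsc hdel hh hsh
  have hh0 : (0:ℝ) ≤ h := le_of_lt hh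
  have hfac : (0:ℝ) ≤ 1 + h * K_A := by positivity
  have habs : |s - s'| = s - s' := abs_of_nonneg (by linarith)
  -- membership facts
  have m1 : s + 2*h ∈ Set.Ico (0:ℝ) c := ⟨by linarith, hsh⟩
  have m2 : s' + 2*h ∈ Set.Ico (0:ℝ) c := ⟨by linarith, by linarith⟩
  have m3 : s ∈ Set.Ico (0:ℝ) c := ⟨by linarith, hsc⟩
  have m4 : s' ∈ Set.Ico (0:ℝ) c := ⟨hs'0, by linarith⟩
  -- T1
  have h1 : dist (ξ (s + 2*h)) (ξ (s' + 2*h)) ≤ L * (s - s') := by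
    have := hLip _ m1 _ m2
    have e : |s + 2*h - (s' + 2*h)| = s - s' := by
      rw [show s + 2*h - (s' + 2*h) = s - s' by ring, habs]
    rwa [e] at this
  -- T3
  have h3 : dist (Ψ (s' + h) (Φ s' (ξ s') h) h) (Ψ (s + h) (Φ s' (ξ s') h) h)
      ≤ C * h * (s - s') ^ α := by
    have := hCΨ (s' + h) (s + h) (Φ s' (ξ s') h) h hh0
    have e : |s' + h - (s + h)| = s - s' := by
      rw [show s' + h - (s + h) = -(s - s') by ring, abs_neg, habs]
    rwa [e] at this
  -- T4
  have h4 : dist (Ψ (s + h) (Φ s' (ξ s') h) h) (Ψ (s + h) (Φ s (ξ s') h) h)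
      ≤ C * h * (s - s') ^ α * (1 + h * K_A) := by
    have hA := hAΨ (s + h) (Φ s' (ξ s') h) (Φ s (ξ s') h) h hh0
    have hCf := hCΦ s' s (ξ s') h hh0
    have e : |s' - s| = s - s' := by rw [show s' - s = -(s - s') by ring, abs_neg, habs]
    rw [e] at hCf
    calc dist (Ψ (s + h) (Φ s' (ξ s') h) h) (Ψ (s + h) (Φ s (ξ s') h) h)
        ≤ dist (Φ s' (ξ s') h) (Φ s (ξ s') h) * (1 + h * K_A) := hA
      _ ≤ C * h * (s - s') ^ α * (1 + h * K_A) := by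
          exact mul_le_mul_of_nonneg_right hCf hfac
  -- T5
  have h5 : dist (Ψ (s + h) (Φ s (ξ s') h) h) (Ψ (s + h) (Φ s (ξ s) h) h)
      ≤ L * (s - s') * (1 + h * K_A) ^ 2 := by
    have hA1 := hAΨ (s + h) (Φ s (ξ s') h) (Φ s (ξ s) h) h hh0
    have hA2 := hAΦ s (ξ s') (ξ s) h hh0
    have hlip := hLip _ m4 _ m3
    have e : |s' - s| = s - s' := by rw [show s' - s = -(s - s') by ring, abs_neg, habs]
    rw [e] at hlip
    calc dist (Ψ (s + h) (Φ s (ξ s') h) h) (Ψ (s + h) (Φ s (ξ s) h) h)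
        ≤ dist (Φ s (ξ s') h) (Φ s (ξ s) h) * (1 + h * K_A) := hA1
      _ ≤ (dist (ξ s') (ξ s) * (1 + h * K_A)) * (1 + h * K_A) :=
          mul_le_mul_of_nonneg_right hA2 hfac
      _ ≤ ((L * (s - s')) * (1 + h * K_A)) * (1 + h * K_A) := by
          exact mul_le_mul_of_nonneg_right
            (mul_le_mul_of_nonneg_right hlip hfac) hfac
      _ = L * (s - s') * (1 + h * K_A) ^ 2 := by ring
  -- triangle chain
  have tri : dist (ξ (s + 2*h)) (Ψ (s + h) (Φ s (ξ s) h) h) ≤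
      dist (ξ (s + 2*h)) (ξ (s' + 2*h)) +
      dist (ξ (s' + 2*h)) (Ψ (s' + h) (Φ s' (ξ s') h) h) +
      dist (Ψ (s' + h) (Φ s' (ξ s') h) h) (Ψ (s + h) (Φ s' (ξ s') h) h) +
      dist (Ψ (s + h) (Φ s' (ξ s') h) h) (Ψ (s + h) (Φ s (ξ s') h) h) +
      dist (Ψ (s + h) (Φ s (ξ s') h) h) (Ψ (s + h) (Φ s (ξ s) h) h) := by
    calc dist (ξ (s + 2*h)) (Ψ (s + h) (Φ s (ξ s) h) h)
        ≤ dist (ξ (s + 2*h)) (Ψ (s + h) (Φ s (ξ s') h) h) +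
          dist (Ψ (s + h) (Φ s (ξ s') h) h) (Ψ (s + h) (Φ s (ξ s) h) h) :=
            dist_triangle _ _ _
      _ ≤ (dist (ξ (s + 2*h)) (Ψ (s + h) (Φ s' (ξ s') h) h) +
          dist (Ψ (s + h) (Φ s' (ξ s') h) h) (Ψ (s + h) (Φ s (ξ s') h) h)) +
          dist (Ψ (s + h) (Φ s (ξ s') h) h) (Ψ (s + h) (Φ s (ξ s) h) h) := by
            gcongr; exact dist_triangle _ _ _
      _ ≤ ((dist (ξ (s + 2*h)) (Ψ (s' + h) (Φ s' (ξ s') h) h) +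
          dist (Ψ (s' + h) (Φ s' (ξ s') h) h) (Ψ (s + h) (Φ s' (ξ s') h) h)) +
          dist (Ψ (s + h) (Φ s' (ξ s') h) h) (Ψ (s + h) (Φ s (ξ s') h) h)) +
          dist (Ψ (s + h) (Φ s (ξ s') h) h) (Ψ (s + h) (Φ s (ξ s) h) h) := by
            gcongr; exact dist_triangle _ _ _
      _ ≤ (((dist (ξ (s + 2*h)) (ξ (s' + 2*h)) +
          dist (ξ (s' + 2*h)) (Ψ (s' + h) (Φ s' (ξ s') h) h)) +
          dist (Ψ (s' + h) (Φ s' (ξ s') h) h) (Ψ (s + h) (Φ s' (ξ s') h) h)) +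
          dist (Ψ (s + h) (Φ s' (ξ s') h) h) (Ψ (s + h) (Φ s (ξ s') h) h)) +
          dist (Ψ (s + h) (Φ s (ξ s') h) h) (Ψ (s + h) (Φ s (ξ s) h) h) := by
            gcongr; exact dist_triangle _ _ _
      _ = _ := by ring
  have key : L * (s - s') * (1 + (1 + h * K_A) ^ 2) + C * h * (s - s') ^ α * (2 + h * K_A)
      = L * (s - s') + C * h * (s - s') ^ α + C * h * (s - s') ^ α * (1 + h * K_A)
        + L * (s - s') * (1 + h * K_A) ^ 2 := by ring
  linarith
end
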